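/- arXiv:1407.1478 — 4 statements merged into one kernel-verified Lean document; each statement's English description precedes it below -/
import Mathlib

section
/- If R = aΠ + bΦ + cΨ for real numbers a, b, c, then for every unit vector X in V one has R(X,JX,JX,X) = a + b·|X_D|² + c·|X_D|⁴. -/
open scoped RealInnerProductSpace
open Module

/-!
Everything is evaluated on the frame `X, JX`. Since `J` is a skew-adjoint complex structure it is
an isometry with `⟪JX, X⟫ = 0`, and since `D` is `J`-invariant the orthogonal projection onto `D`
commutes with `J`, so `h` inherits the same two properties. Each of `Π(X,JX,JX,X)`,
`Φ(X,JX,JX,X)`, `Ψ(X,JX,JX,X)` then collapses to a monomial in `‖X‖²` and `‖X_D‖²`.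
-/

noncomputable section ComplexStructure

variable {V : Type*} [NormedAddCommGroup V] [InnerProductSpace ℝ V]

def piTensor (J : V →ₗ[ℝ] V) (X Y Z U : V) : ℝ :=
  (1/4) * (⟪Y, Z⟫ * ⟪X, U⟫ - ⟪X, Z⟫ * ⟪Y, U⟫
    + ⟪J Y, Z⟫ * ⟪J X, U⟫ - ⟪J X, Z⟫ * ⟪J Y, U⟫ - 2 * ⟪J X, Y⟫ * ⟪J Z, U⟫)

def phiTensor (J : V →ₗ[ℝ] V) (h : V → V → ℝ) (X Y Z U : V) : ℝ :=
  (1/8) * (⟪Y, Z⟫ * h X U - ⟪X, Z⟫ * h Y U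
    + ⟪X, U⟫ * h Y Z - ⟪Y, U⟫ * h X Z
    + ⟪J Y, Z⟫ * h (J X) U - ⟪J X, Z⟫ * h (J Y) U
    + ⟪J X, U⟫ * h (J Y) Z - ⟪J Y, U⟫ * h (J X) Z
    - 2 * ⟪J X, Y⟫ * h (J Z) U - 2 * ⟪J Z, U⟫ * h (J X) Y)

def psiTensor (J : V →ₗ[ℝ] V) (h : V → V → ℝ) (X Y Z U : V) : ℝ :=
  -(h (J X) Y * h (J Z) U)

variable {J : V →ₗ[ℝ] V}

theorem inner_apply_self_eq_zero_of_skew (hJskew : ∀ x y, ⟪J x, y⟫ = -⟪x, J y⟫) (v : V) :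
    ⟪J v, v⟫ = 0 := by
  have h := hJskew v v
  rw [real_inner_comm (J v)] at h
  linarith

theorem inner_apply_apply_of_skew (hJ2 : ∀ x, J (J x) = -x)
    (hJskew : ∀ x y, ⟪J x, y⟫ = -⟪x, J y⟫) (v w : V) : ⟪J v, J w⟫ = ⟪v, w⟫ := by
  rw [hJskew, hJ2, inner_neg_right, neg_neg]

theorem starProjection_apply_comm_of_skew (hJskew : ∀ x y, ⟪J x, y⟫ = -⟪x, J y⟫)
    {D : Submodule ℝ V} [D.HasOrthogonalProjection] (hDJ : ∀ x ∈ D, J x ∈ D) (x : V) :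
    D.starProjection (J x) = J (D.starProjection x) := by
  refine D.eq_starProjection_of_mem_of_inner_eq_zero (hDJ _ (D.starProjection_apply_mem x))
    fun w hw => ?_
  have hperp := D.sub_starProjection_mem_orthogonal x (J w) (hDJ w hw)
  rw [← map_sub, hJskew, real_inner_comm, hperp, neg_zero]

theorem inner_self_apply_eq_zero_of_skew (hJskew : ∀ x y, ⟪J x, y⟫ = -⟪x, J y⟫) (v : V) :
    ⟪v, J v⟫ = 0 := by
  rw [real_inner_comm]; exact inner_apply_self_eq_zero_of_skew hJskew v

theorem piTensor_apply_self_apply (hJ2 : ∀ x, J (J x) = -x)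
    (hJskew : ∀ x y, ⟪J x, y⟫ = -⟪x, J y⟫) (X : V) : piTensor J X (J X) (J X) X = ‖X‖ ^ 4 := by
  simp only [piTensor, hJ2, inner_neg_left, inner_apply_apply_of_skew hJ2 hJskew,
    inner_apply_self_eq_zero_of_skew hJskew, inner_self_apply_eq_zero_of_skew hJskew,
    real_inner_self_eq_norm_sq]
  ring

variable {P : V →ₗ[ℝ] V}

theorem phiTensor_apply_self_apply (hJ2 : ∀ x, J (J x) = -x)
    (hJskew : ∀ x y, ⟪J x, y⟫ = -⟪x, J y⟫) (hPJ : ∀ x, P (J x) = J (P x)) (X : V) :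
    phiTensor J (fun x y => ⟪P x, P y⟫) X (J X) (J X) X = ‖X‖ ^ 2 * ‖P X‖ ^ 2 := by
  simp only [phiTensor, hPJ, hJ2, map_neg, inner_neg_left, inner_apply_apply_of_skew hJ2 hJskew,
    inner_apply_self_eq_zero_of_skew hJskew, inner_self_apply_eq_zero_of_skew hJskew,
    real_inner_self_eq_norm_sq]
  ring

theorem psiTensor_apply_self_apply (hJ2 : ∀ x, J (J x) = -x)
    (hJskew : ∀ x y, ⟪J x, y⟫ = -⟪x, J y⟫) (hPJ : ∀ x, P (J x) = J (P x)) (X : V) :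
    psiTensor J (fun x y => ⟪P x, P y⟫) X (J X) (J X) X = ‖P X‖ ^ 4 := by
  simp only [psiTensor, hPJ, hJ2, map_neg, inner_neg_left,
    inner_apply_apply_of_skew hJ2 hJskew, real_inner_self_eq_norm_sq]
  ring

end ComplexStructure

theorem stmt3_general {V : Type*} [NormedAddCommGroup V] [InnerProductSpace ℝ V] [FiniteDimensional ℝ V]
    (J : V →ₗ[ℝ] V) (hJ2 : ∀ x, J (J x) = -x)
    (hJskew : ∀ x y, ⟪J x, y⟫ = -⟪x, J y⟫)
    (D : Submodule ℝ V)
    (hDJ : ∀ x ∈ D, J x ∈ D)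
    (h : V → V → ℝ)
    (hh : ∀ x y, h x y = ⟪(D.orthogonalProjection x : V), (D.orthogonalProjection y : V)⟫)
    (Pp : V → V → V → V → ℝ)
    (hPp : ∀ X Y Z U, Pp X Y Z U = (1/4) * (⟪Y, Z⟫ * ⟪X, U⟫ - ⟪X, Z⟫ * ⟪Y, U⟫
      + ⟪J Y, Z⟫ * ⟪J X, U⟫ - ⟪J X, Z⟫ * ⟪J Y, U⟫ - 2 * ⟪J X, Y⟫ * ⟪J Z, U⟫))
    (Ph : V → V → V → V → ℝ)
    (hPh : ∀ X Y Z U, Ph X Y Z U = (1/8) * (⟪Y, Z⟫ * h X U - ⟪X, Z⟫ * h Y U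
      + ⟪X, U⟫ * h Y Z - ⟪Y, U⟫ * h X Z
      + ⟪J Y, Z⟫ * h (J X) U - ⟪J X, Z⟫ * h (J Y) U
      + ⟪J X, U⟫ * h (J Y) Z - ⟪J Y, U⟫ * h (J X) Z
      - 2 * ⟪J X, Y⟫ * h (J Z) U - 2 * ⟪J Z, U⟫ * h (J X) Y))
    (Ps : V → V → V → V → ℝ)
    (hPs : ∀ X Y Z U, Ps X Y Z U = -(h (J X) Y * h (J Z) U))
    (a b c : ℝ) (R : V → V → V → V → ℝ)
    (hR : ∀ X Y Z U, R X Y Z U = a * Pp X Y Z U + b * Ph X Y Z U + c * Ps X Y Z U) :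
    ∀ X : V, ‖X‖ = 1 →
      R X (J X) (J X) X
        = a + b * ‖(D.orthogonalProjection X : V)‖ ^ 2
            + c * ‖(D.orthogonalProjection X : V)‖ ^ 4 := by
  intro X hX
  obtain rfl : h = fun x y => ⟪D.starProjection x, D.starProjection y⟫ := funext₂ hh
  have hPJ : ∀ x, (D.starProjection : V →ₗ[ℝ] V) (J x) = J (D.starProjection x) :=
    starProjection_apply_comm_of_skew hJskew hDJ
  have hPi := (hPp X (J X) (J X) X).trans (piTensor_apply_self_apply hJ2 hJskew X)
  have hPhi := (hPh X (J X) (J X) X).trans (phiTensor_apply_self_apply hJ2 hJskew hPJ X)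
  have hPsi := (hPs X (J X) (J X) X).trans (psiTensor_apply_self_apply hJ2 hJskew hPJ X)
  rw [hR, hPi, hPhi, hPsi, hX, ← D.starProjection_apply, ContinuousLinearMap.coe_coe]
  ring

theorem stmt3 {V : Type*} [NormedAddCommGroup V] [InnerProductSpace ℝ V] [FiniteDimensional ℝ V]
    (J : V →ₗ[ℝ] V) (hJ2 : ∀ x, J (J x) = -x)
    (hJskew : ∀ x y, ⟪J x, y⟫ = -⟪x, J y⟫)
    (D : Submodule ℝ V) (hDdim : finrank ℝ D = 2)
    (hDJ : ∀ x ∈ D, J x ∈ D)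
    (h : V → V → ℝ)
    (hh : ∀ x y, h x y = ⟪(D.orthogonalProjection x : V), (D.orthogonalProjection y : V)⟫)
    (Pp : V → V → V → V → ℝ)
    (hPp : ∀ X Y Z U, Pp X Y Z U = (1/4) * (⟪Y, Z⟫ * ⟪X, U⟫ - ⟪X, Z⟫ * ⟪Y, U⟫
      + ⟪J Y, Z⟫ * ⟪J X, U⟫ - ⟪J X, Z⟫ * ⟪J Y, U⟫ - 2 * ⟪J X, Y⟫ * ⟪J Z, U⟫))
    (Ph : V → V → V → V → ℝ)
    (hPh : ∀ X Y Z U, Ph X Y Z U = (1/8) * (⟪Y, Z⟫ * h X U - ⟪X, Z⟫ * h Y U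
      + ⟪X, U⟫ * h Y Z - ⟪Y, U⟫ * h X Z
      + ⟪J Y, Z⟫ * h (J X) U - ⟪J X, Z⟫ * h (J Y) U
      + ⟪J X, U⟫ * h (J Y) Z - ⟪J Y, U⟫ * h (J X) Z
      - 2 * ⟪J X, Y⟫ * h (J Z) U - 2 * ⟪J Z, U⟫ * h (J X) Y))
    (Ps : V → V → V → V → ℝ)
    (hPs : ∀ X Y Z U, Ps X Y Z U = -(h (J X) Y * h (J Z) U))
    (a b c : ℝ) (R : V → V → V → V → ℝ)
    (hR : ∀ X Y Z U, R X Y Z U = a * Pp X Y Z U + b * Ph X Y Z U + c * Ps X Y Z U) :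
    ∀ X : V, ‖X‖ = 1 →
      R X (J X) (J X) X
        = a + b * ‖(D.orthogonalProjection X : V)‖ ^ 2
            + c * ‖(D.orthogonalProjection X : V)‖ ^ 4 :=
  stmt3_general J hJ2 hJskew D hDJ h hh Pp hPp Ph hPh Ps hPs a b c R hR
end

section
/- With I = J̄ (the opposite structure), Π(J̄X, J̄Y, Z, U) − Π(X,Y,Z,U) = (1/2)[m(IY,Z)h(IX,U) + m(IX,U)h(IY,Z) − m(IX,Z)h(IY,U) − h(IX,Z)m(IY,U) − h(Y,Z)m(X,U) − m(Y,Z)h(X,U) + h(X,Z)m(Y,U) + m(X,Z)h(Y,U)] for all X,Y,Z,U. -/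
/-! Let `R` be the reflection in `D` (the identity on `D`, `-1` on `E = Dᗮ`). Since `J` is skew and
preserves `D`, it preserves `E` too, so `J` commutes with `R` and `J̄ = J ∘ R`. Moreover
`h(x, y) = (g(x, y) + g(Rx, y)) / 2` and `m(x, y) = (g(x, y) - g(Rx, y)) / 2`. Using `J² = -1`,
`R² = 1` and that `R` is an isometry, every term of the identity becomes a polynomial in
`g(a, b)`, `g(Ra, b)`, `g(Ja, b)` and `g(RJa, b)` for the pairs `(a, b)` among `X, Y, Z, U`, and
the identity is a ring identity in these quantities. -/

open scoped RealInnerProductSpace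
open Module

namespace Submodule

open scoped InnerProductSpace

variable {𝕜 E : Type*} [RCLike 𝕜] [NormedAddCommGroup E] [InnerProductSpace 𝕜 E]
  {K : Submodule 𝕜 E}

theorem mapsTo_orthogonal_of_skew {T : E →ₗ[𝕜] E} (hT : ∀ x y, ⟪T x, y⟫_𝕜 = -⟪x, T y⟫_𝕜)
    (hK : ∀ x ∈ K, T x ∈ K) : ∀ x ∈ Kᗮ, T x ∈ Kᗮ := by
  intro x hx
  rw [mem_orthogonal]
  intro u hu
  rw [← neg_neg ⟪u, T x⟫_𝕜, ← hT, inner_right_of_mem_orthogonal (hK u hu) hx, neg_zero]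

variable [K.HasOrthogonalProjection]

theorem apply_eq_apply_reflection {F : Type*} [AddCommGroup F] [Module 𝕜 F] {T S : E →ₗ[𝕜] F}
    (hK : ∀ x ∈ K, T x = S x) (hKperp : ∀ x ∈ Kᗮ, T x = -S x) (x : E) :
    T x = S (K.reflection x) := by
  have hsplit := K.starProjection_add_starProjection_orthogonal x
  have hP := K.starProjection_apply_mem x
  have hQ := Kᗮ.starProjection_apply_mem x
  rw [← hsplit, map_add, map_add, map_add, hK _ hP, hKperp _ hQ,
    reflection_mem_subspace_eq_self hP, reflection_mem_subspace_orthogonalComplement_eq_neg hQ,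
    map_neg]

theorem reflection_apply_comm {T : E →ₗ[𝕜] E} (hK : ∀ x ∈ K, T x ∈ K)
    (hKperp : ∀ x ∈ Kᗮ, T x ∈ Kᗮ) (x : E) : K.reflection (T x) = T (K.reflection x) :=
  apply_eq_apply_reflection (T := K.reflection.toLinearEquiv.toLinearMap ∘ₗ T)
    (fun y hy => by simpa using reflection_mem_subspace_eq_self (hK y hy))
    (fun y hy => by simpa using reflection_mem_subspace_orthogonalComplement_eq_neg (hKperp y hy))
    x

theorem inner_starProjection_starProjection_eq (x y : E) :
    ⟪K.starProjection x, K.starProjection y⟫_𝕜 = (⟪x, y⟫_𝕜 + ⟪K.reflection x, y⟫_𝕜) / 2 := by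
  rw [eq_div_iff two_ne_zero, mul_comm, inner_starProjection_left_eq_right,
    starProjection_eq_self_iff.mpr (starProjection_apply_mem K y),
    ← inner_starProjection_left_eq_right, reflection_apply, inner_sub_left, two_smul,
    inner_add_left]
  ring

end Submodule

open Submodule in
theorem stmt6_general {V : Type*} [NormedAddCommGroup V] [InnerProductSpace ℝ V] [FiniteDimensional ℝ V]
    (J : V →ₗ[ℝ] V) (hJ2 : ∀ x, J (J x) = -x)
    (hJskew : ∀ x y, ⟪J x, y⟫ = -⟪x, J y⟫)
    (D : Submodule ℝ V)
    (hDJ : ∀ x ∈ D, J x ∈ D)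
    (h : V → V → ℝ)
    (hh : ∀ x y, h x y = ⟪(D.orthogonalProjection x : V), (D.orthogonalProjection y : V)⟫)
    (m : V → V → ℝ)
    (hm : ∀ x y, m x y = ⟪(Dᗮ.orthogonalProjection x : V), (Dᗮ.orthogonalProjection y : V)⟫)
    (Jb : V →ₗ[ℝ] V) (hJbD : ∀ x ∈ D, Jb x = J x)
    (hJbE : ∀ x ∈ Dᗮ, Jb x = -(J x))
    (Pp : V → V → V → V → ℝ)
    (hPp : ∀ X Y Z U, Pp X Y Z U = (1/4) * (⟪Y, Z⟫ * ⟪X, U⟫ - ⟪X, Z⟫ * ⟪Y, U⟫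
      + ⟪J Y, Z⟫ * ⟪J X, U⟫ - ⟪J X, Z⟫ * ⟪J Y, U⟫ - 2 * ⟪J X, Y⟫ * ⟪J Z, U⟫)) :
    ∀ X Y Z U : V, Pp (Jb X) (Jb Y) Z U - Pp X Y Z U
      = (1/2) * (m (Jb Y) Z * h (Jb X) U + m (Jb X) U * h (Jb Y) Z - m (Jb X) Z * h (Jb Y) U
        - h (Jb X) Z * m (Jb Y) U - h Y Z * m X U - m Y Z * h X U
        + h X Z * m Y U + m X Z * h Y U) := by
  have hJ_comm : ∀ x, J (D.reflection x) = D.reflection (J x) := fun x =>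
    (reflection_apply_comm hDJ (mapsTo_orthogonal_of_skew hJskew hDJ) x).symm
  have hJb : ∀ x, Jb x = D.reflection (J x) := fun x => by
    rw [apply_eq_apply_reflection hJbD hJbE, hJ_comm]
  have hh_reflection : ∀ x y, h x y = (⟪x, y⟫ + ⟪D.reflection x, y⟫) / 2 := fun x y =>
    (hh x y).trans (inner_starProjection_starProjection_eq x y)
  have hm_reflection : ∀ x y, m x y = (⟪x, y⟫ - ⟪D.reflection x, y⟫) / 2 := fun x y => by
    rw [hm, sub_eq_add_neg, ← inner_neg_left, ← reflection_orthogonal_apply]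
    exact inner_starProjection_starProjection_eq x y
  intro X Y Z U
  simp only [hPp, hh_reflection, hm_reflection, hJb, hJ_comm, hJ2, map_neg, reflection_reflection,
    inner_neg_left, LinearIsometryEquiv.inner_map_map, hJskew]
  ring

theorem stmt6 {V : Type*} [NormedAddCommGroup V] [InnerProductSpace ℝ V] [FiniteDimensional ℝ V] (hV : finrank ℝ V = 4)
    (J : V →ₗ[ℝ] V) (hJ2 : ∀ x, J (J x) = -x)
    (hJskew : ∀ x y, ⟪J x, y⟫ = -⟪x, J y⟫)
    (D : Submodule ℝ V) (hDdim : finrank ℝ D = 2)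
    (hDJ : ∀ x ∈ D, J x ∈ D)
    (h : V → V → ℝ)
    (hh : ∀ x y, h x y = ⟪(D.orthogonalProjection x : V), (D.orthogonalProjection y : V)⟫)
    (m : V → V → ℝ)
    (hm : ∀ x y, m x y = ⟪(Dᗮ.orthogonalProjection x : V), (Dᗮ.orthogonalProjection y : V)⟫)
    (Jb : V →ₗ[ℝ] V) (hJbD : ∀ x ∈ D, Jb x = J x)
    (hJbE : ∀ x ∈ Dᗮ, Jb x = -(J x))
    (Pp : V → V → V → V → ℝ)
    (hPp : ∀ X Y Z U, Pp X Y Z U = (1/4) * (⟪Y, Z⟫ * ⟪X, U⟫ - ⟪X, Z⟫ * ⟪Y, U⟫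
      + ⟪J Y, Z⟫ * ⟪J X, U⟫ - ⟪J X, Z⟫ * ⟪J Y, U⟫ - 2 * ⟪J X, Y⟫ * ⟪J Z, U⟫)) :
    ∀ X Y Z U : V, Pp (Jb X) (Jb Y) Z U - Pp X Y Z U
      = (1/2) * (m (Jb Y) Z * h (Jb X) U + m (Jb X) U * h (Jb Y) Z - m (Jb X) Z * h (Jb Y) U
        - h (Jb X) Z * m (Jb Y) U - h Y Z * m X U - m Y Z * h X U
        + h X Z * m Y U + m X Z * h Y U) :=
  stmt6_general J hJ2 hJskew D hDJ h hh m hm Jb hJbD hJbE Pp hPp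
end

section
/- With I = J̄, Φ(J̄X, J̄Y, Z, U) − Φ(X,Y,Z,U) = (1/4)[m(IY,Z)h(IX,U) + m(IX,U)h(IY,Z) − m(IX,Z)h(IY,U) − h(IX,Z)m(IY,U) − h(Y,Z)m(X,U) − m(Y,Z)h(X,U) + h(X,Z)m(Y,U) + m(X,Z)h(Y,U)] for all X,Y,Z,U. -/
/-!
Since `J` is skew and preserves `D`, it also preserves `Dᗮ`, and so does `Jb`; hence both commute
with the orthogonal projections onto `D` and `Dᗮ`, `Jb` acting as `J` on the `D`-component and as
`-J` on the `Dᗮ`-component. Splitting every inner product as `h + m` and pushing the projections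
through `J` and `Jb` turns the identity into a polynomial identity between inner products of
components.
-/

open scoped RealInnerProductSpace
open Module

namespace Submodule

variable {𝕜 E : Type*} [RCLike 𝕜] [NormedAddCommGroup E] [InnerProductSpace 𝕜 E]
  {K : Submodule 𝕜 E} {J : E →ₗ[𝕜] E}

theorem map_mem_orthogonal_of_skew (hJ : ∀ x y, inner 𝕜 (J x) y = -inner 𝕜 x (J y))
    (hK : ∀ x ∈ K, J x ∈ K) {x : E} (hx : x ∈ Kᗮ) : J x ∈ Kᗮ := by
  rw [mem_orthogonal]
  intro y hy
  rw [← inner_conj_symm, hJ, inner_left_of_mem_orthogonal (hK y hy) hx, neg_zero, map_zero]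

variable [K.HasOrthogonalProjection]

theorem starProjection_map_apply_of_mapsTo (hK : ∀ x ∈ K, J x ∈ K)
    (hKo : ∀ x ∈ Kᗮ, J x ∈ Kᗮ) (x : E) :
    K.starProjection (J x) = J (K.starProjection x) :=
  eq_starProjection_of_mem_orthogonal' (hK _ (K.starProjection_apply_mem x))
    (hKo _ (K.sub_starProjection_mem_orthogonal x)) (by rw [← map_add, add_sub_cancel])

theorem starProjection_orthogonal_map_apply_of_mapsTo (hK : ∀ x ∈ K, J x ∈ K)
    (hKo : ∀ x ∈ Kᗮ, J x ∈ Kᗮ) (x : E) :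
    Kᗮ.starProjection (J x) = J (Kᗮ.starProjection x) := by
  simp only [starProjection_orthogonal_val, map_sub, starProjection_map_apply_of_mapsTo hK hKo]

theorem inner_eq_inner_starProjection_add_inner_starProjection_orthogonal (x y : E) :
    inner 𝕜 x y = inner 𝕜 (K.starProjection x) (K.starProjection y)
      + inner 𝕜 (Kᗮ.starProjection x) (Kᗮ.starProjection y) := by
  conv_lhs => rw [← K.starProjection_add_starProjection_orthogonal x,
    ← K.starProjection_add_starProjection_orthogonal y]
  rw [inner_add_left, inner_add_right, inner_add_right,
    inner_right_of_mem_orthogonal (K.starProjection_apply_mem x) (Kᗮ.starProjection_apply_mem y),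
    inner_left_of_mem_orthogonal (K.starProjection_apply_mem y) (Kᗮ.starProjection_apply_mem x),
    add_zero, zero_add]

end Submodule

theorem stmt7_general {V : Type*} [NormedAddCommGroup V] [InnerProductSpace ℝ V] [FiniteDimensional ℝ V]
    (J : V →ₗ[ℝ] V) (hJ2 : ∀ x, J (J x) = -x)
    (hJskew : ∀ x y, ⟪J x, y⟫ = -⟪x, J y⟫)
    (D : Submodule ℝ V)
    (hDJ : ∀ x ∈ D, J x ∈ D)
    (h : V → V → ℝ)
    (hh : ∀ x y, h x y = ⟪(D.orthogonalProjectionOnto x : V), (D.orthogonalProjectionOnto y : V)⟫)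
    (m : V → V → ℝ)
    (hm : ∀ x y, m x y = ⟪(Dᗮ.orthogonalProjectionOnto x : V), (Dᗮ.orthogonalProjectionOnto y : V)⟫)
    (Jb : V →ₗ[ℝ] V) (hJbD : ∀ x ∈ D, Jb x = J x)
    (hJbE : ∀ x ∈ Dᗮ, Jb x = -(J x))
    (Ph : V → V → V → V → ℝ)
    (hPh : ∀ X Y Z U, Ph X Y Z U = (1/8) * (⟪Y, Z⟫ * h X U - ⟪X, Z⟫ * h Y U
      + ⟪X, U⟫ * h Y Z - ⟪Y, U⟫ * h X Z
      + ⟪J Y, Z⟫ * h (J X) U - ⟪J X, Z⟫ * h (J Y) U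
      + ⟪J X, U⟫ * h (J Y) Z - ⟪J Y, U⟫ * h (J X) Z
      - 2 * ⟪J X, Y⟫ * h (J Z) U - 2 * ⟪J Z, U⟫ * h (J X) Y)) :
    ∀ X Y Z U : V, Ph (Jb X) (Jb Y) Z U - Ph X Y Z U
      = (1/4) * (m (Jb Y) Z * h (Jb X) U + m (Jb X) U * h (Jb Y) Z - m (Jb X) Z * h (Jb Y) U
        - h (Jb X) Z * m (Jb Y) U - h Y Z * m X U - m Y Z * h X U
        + h X Z * m Y U + m X Z * h Y U) := by
  have hEJ : ∀ x ∈ Dᗮ, J x ∈ Dᗮ :=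
    fun _ ↦ Submodule.map_mem_orthogonal_of_skew hJskew hDJ
  have hDJb : ∀ x ∈ D, Jb x ∈ D := fun x hx => hJbD x hx ▸ hDJ x hx
  have hEJb : ∀ x ∈ Dᗮ, Jb x ∈ Dᗮ := fun x hx => hJbE x hx ▸ neg_mem (hEJ x hx)
  have hprojD_Jb (x : V) : D.starProjection (Jb x) = J (D.starProjection x) := by
    rw [Submodule.starProjection_map_apply_of_mapsTo hDJb hEJb,
      hJbD _ (D.starProjection_apply_mem x)]
  have hprojE_Jb (x : V) : Dᗮ.starProjection (Jb x) = -J (Dᗮ.starProjection x) := by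
    rw [Submodule.starProjection_orthogonal_map_apply_of_mapsTo hDJb hEJb,
      hJbE _ (Dᗮ.starProjection_apply_mem x)]
  have hsplit (x y : V) : ⟪x, y⟫ = h x y + m x y := by
    rw [hh, hm, D.inner_eq_inner_starProjection_add_inner_starProjection_orthogonal]; rfl
  intro X Y Z U
  simp only [hPh, hsplit]
  -- normal form: projections applied first, `J` only in the right argument of an inner product
  simp only [hh, hm, Submodule.coe_orthogonalProjectionOnto_apply, hprojD_Jb, hprojE_Jb,
    Submodule.starProjection_map_apply_of_mapsTo hDJ hEJ,
    Submodule.starProjection_orthogonal_map_apply_of_mapsTo hDJ hEJ,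
    hJ2, map_neg, inner_neg_left, inner_neg_right, neg_neg, hJskew]
  ring

theorem stmt7 {V : Type*} [NormedAddCommGroup V] [InnerProductSpace ℝ V] [FiniteDimensional ℝ V] (hV : finrank ℝ V = 4)
    (J : V →ₗ[ℝ] V) (hJ2 : ∀ x, J (J x) = -x)
    (hJskew : ∀ x y, ⟪J x, y⟫ = -⟪x, J y⟫)
    (D : Submodule ℝ V) (hDdim : finrank ℝ D = 2)
    (hDJ : ∀ x ∈ D, J x ∈ D)
    (h : V → V → ℝ)
    (hh : ∀ x y, h x y = ⟪(D.orthogonalProjectionOnto x : V), (D.orthogonalProjectionOnto y : V)⟫)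
    (m : V → V → ℝ)
    (hm : ∀ x y, m x y = ⟪(Dᗮ.orthogonalProjectionOnto x : V), (Dᗮ.orthogonalProjectionOnto y : V)⟫)
    (Jb : V →ₗ[ℝ] V) (hJbD : ∀ x ∈ D, Jb x = J x)
    (hJbE : ∀ x ∈ Dᗮ, Jb x = -(J x))
    (Ph : V → V → V → V → ℝ)
    (hPh : ∀ X Y Z U, Ph X Y Z U = (1/8) * (⟪Y, Z⟫ * h X U - ⟪X, Z⟫ * h Y U
      + ⟪X, U⟫ * h Y Z - ⟪Y, U⟫ * h X Z
      + ⟪J Y, Z⟫ * h (J X) U - ⟪J X, Z⟫ * h (J Y) U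
      + ⟪J X, U⟫ * h (J Y) Z - ⟪J Y, U⟫ * h (J X) Z
      - 2 * ⟪J X, Y⟫ * h (J Z) U - 2 * ⟪J Z, U⟫ * h (J X) Y)) :
    ∀ X Y Z U : V, Ph (Jb X) (Jb Y) Z U - Ph X Y Z U
      = (1/4) * (m (Jb Y) Z * h (Jb X) U + m (Jb X) U * h (Jb Y) Z - m (Jb X) Z * h (Jb Y) U
        - h (Jb X) Z * m (Jb Y) U - h Y Z * m X U - m Y Z * h X U
        + h X Z * m Y U + m X Z * h Y U) :=
  stmt7_general J hJ2 hJskew D hDJ h hh m hm Jb hJbD hJbE Ph hPh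
end

section
/- The tensor K = (1/6)Π − Φ + Ψ satisfies the first Bianchi identity: K(X,Y,Z,U) + K(Y,Z,X,U) + K(Z,X,Y,U) = 0 for all X,Y,Z,U. -/
open scoped RealInnerProductSpace
open Module

/-!
Each of Π, Φ, Ψ satisfies the first Bianchi identity on its own. Writing g = ⟪·,·⟫,
ω(X,Y) = g(JX,Y) and σ(X,Y) = h(JX,Y), both Π and Φ are sums of the blocks
a(Y,Z)b(X,U) − a(X,Z)b(Y,U) with a ∈ {g, h} symmetric and
ω'(Y,Z)b(X,U) − ω'(X,Z)b(Y,U) − 2ω'(X,Y)b(Z,U) with ω' ∈ {ω, σ} skew, and each block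
satisfies the identity whatever b is. Ψ = −σ ⊗ σ satisfies it because σ is decomposable:
in an orthonormal basis e₀, e₁ of the J-invariant plane D one finds
σ(X,Y) = g(Je₀,e₁)(⟨e₀,X⟩⟨e₁,Y⟩ − ⟨e₀,Y⟩⟨e₁,X⟩).
-/

section FirstBianchi

variable {α : Type*}

def FirstBianchi (R : α → α → α → α → ℝ) : Prop :=
  ∀ X Y Z U, R X Y Z U + R Y Z X U + R Z X Y U = 0

theorem firstBianchi_of_symmetric {a : α → α → ℝ} (ha : ∀ x y, a x y = a y x) (b : α → α → ℝ) :
    FirstBianchi fun X Y Z U => a Y Z * b X U - a X Z * b Y U := by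
  intro X Y Z U
  dsimp only
  rw [ha Y X, ha Z Y, ha X Z]
  ring

theorem firstBianchi_of_antisymmetric {ω : α → α → ℝ} (hω : ∀ x y, ω x y = -ω y x)
    (b : α → α → ℝ) :
    FirstBianchi fun X Y Z U => ω Y Z * b X U - ω X Z * b Y U - 2 * ω X Y * b Z U := by
  intro X Y Z U
  dsimp only
  rw [hω X Z, hω Y X, hω Z Y]
  ring

theorem firstBianchi_of_decomposable {σ : α → α → ℝ} {a b : α → ℝ}
    (hσ : ∀ x y, σ x y = a x * b y - a y * b x) :
    FirstBianchi fun X Y Z U => σ X Y * σ Z U := by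
  intro X Y Z U
  simp only [hσ]
  ring

end FirstBianchi

section Projection

variable {V : Type*} [NormedAddCommGroup V] [InnerProductSpace ℝ V]
  {D : Submodule ℝ V} [D.HasOrthogonalProjection] {ι : Type*} [Fintype ι]

theorem inner_orthogonalProjectionOnto_eq_sum (e : OrthonormalBasis ι ℝ D) (x y : V) :
    ⟪(D.orthogonalProjectionOnto x : V), D.orthogonalProjectionOnto y⟫ =
      ∑ i, ⟪x, e i⟫ * ⟪(e i : V), y⟫ := by
  rw [← Submodule.coe_inner, ← e.sum_inner_mul_inner]
  simp

theorem inner_eq_sum_of_mem (e : OrthonormalBasis ι ℝ D) {v : V} (hv : v ∈ D) (x : V) :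
    ⟪v, x⟫ = ∑ i, ⟪v, e i⟫ * ⟪(e i : V), x⟫ := by
  lift v to D using hv
  rw [← Submodule.inner_orthogonalProjectionOnto_eq_of_mem_left, ← e.sum_inner_mul_inner]
  simp

theorem exists_inner_orthogonalProjectionOnto_map_eq_wedge {J : V →ₗ[ℝ] V}
    (hJ : ∀ x y, ⟪J x, y⟫ = -⟪x, J y⟫) (hDJ : ∀ x ∈ D, J x ∈ D) (hD : finrank ℝ D = 2) :
    ∃ a b : V → ℝ, ∀ x y,
      ⟪(D.orthogonalProjectionOnto (J x) : V), D.orthogonalProjectionOnto y⟫ =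
        a x * b y - a y * b x := by
  have : FiniteDimensional ℝ D := .of_finrank_eq_succ hD
  set e := (stdOrthonormalBasis ℝ D).reindex (finCongr hD)
  have hJe : ∀ i x, ⟪J (e i), x⟫ = ∑ j, ⟪J (e i), e j⟫ * ⟪(e j : V), x⟫ := fun i =>
    inner_eq_sum_of_mem e (hDJ _ (e i).2)
  have hJ0 : ∀ v, ⟪J v, v⟫ = 0 := fun v => by
    have := hJ v v
    rw [real_inner_comm (J v) v] at this
    linarith
  refine ⟨fun x => ⟪J (e 0), e 1⟫ * ⟪(e 0 : V), x⟫, fun y => ⟪(e 1 : V), y⟫, fun x y => ?_⟩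
  rw [inner_orthogonalProjectionOnto_eq_sum e, Fin.sum_univ_two, hJ x, hJ x,
    real_inner_comm (J _) x, real_inner_comm (J _) x, hJe 0 x, hJe 1 x, Fin.sum_univ_two,
    Fin.sum_univ_two, hJ0, hJ0, hJ (e 1), real_inner_comm (J (e 0))]
  ring

end Projection

theorem stmt15_general {V : Type*} [NormedAddCommGroup V] [InnerProductSpace ℝ V] [FiniteDimensional ℝ V]
    (J : V →ₗ[ℝ] V)
    (hJskew : ∀ x y, ⟪J x, y⟫ = -⟪x, J y⟫)
    (D : Submodule ℝ V) (hDdim : finrank ℝ D = 2)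
    (hDJ : ∀ x ∈ D, J x ∈ D)
    (h : V → V → ℝ)
    (hh : ∀ x y, h x y = ⟪(D.orthogonalProjection x : V), (D.orthogonalProjection y : V)⟫)
    (Pp : V → V → V → V → ℝ)
    (hPp : ∀ X Y Z U, Pp X Y Z U = (1/4) * (⟪Y, Z⟫ * ⟪X, U⟫ - ⟪X, Z⟫ * ⟪Y, U⟫
      + ⟪J Y, Z⟫ * ⟪J X, U⟫ - ⟪J X, Z⟫ * ⟪J Y, U⟫ - 2 * ⟪J X, Y⟫ * ⟪J Z, U⟫))
    (Ph : V → V → V → V → ℝ)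
    (hPh : ∀ X Y Z U, Ph X Y Z U = (1/8) * (⟪Y, Z⟫ * h X U - ⟪X, Z⟫ * h Y U
      + ⟪X, U⟫ * h Y Z - ⟪Y, U⟫ * h X Z
      + ⟪J Y, Z⟫ * h (J X) U - ⟪J X, Z⟫ * h (J Y) U
      + ⟪J X, U⟫ * h (J Y) Z - ⟪J Y, U⟫ * h (J X) Z
      - 2 * ⟪J X, Y⟫ * h (J Z) U - 2 * ⟪J Z, U⟫ * h (J X) Y))
    (Ps : V → V → V → V → ℝ)
    (hPs : ∀ X Y Z U, Ps X Y Z U = -(h (J X) Y * h (J Z) U))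
    (K : V → V → V → V → ℝ)
    (hK : ∀ X Y Z U, K X Y Z U = (1/6) * Pp X Y Z U - Ph X Y Z U + Ps X Y Z U) :
    ∀ X Y Z U : V, K X Y Z U + K Y Z X U + K Z X Y U = 0 := by
  obtain ⟨a, b, hσ⟩ := exists_inner_orthogonalProjectionOnto_map_eq_wedge hJskew hDJ hDdim
  replace hσ : ∀ x y, h (J x) y = a x * b y - a y * b x := fun x y => (hh _ _).trans (hσ x y)
  have g_symm : ∀ x y : V, ⟪x, y⟫ = ⟪y, x⟫ := fun x y => real_inner_comm y x
  have h_symm : ∀ x y, h x y = h y x := fun x y => by rw [hh, hh, real_inner_comm]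
  have ω_skew : ∀ x y, ⟪J x, y⟫ = -⟪J y, x⟫ := fun x y => by rw [hJskew, real_inner_comm]
  have σ_skew : ∀ x y, h (J x) y = -h (J y) x := fun x y => by rw [hσ, hσ]; ring
  intro X Y Z U
  have gg := firstBianchi_of_symmetric g_symm (fun x y => ⟪x, y⟫) X Y Z U
  have gh := firstBianchi_of_symmetric g_symm h X Y Z U
  have hg := firstBianchi_of_symmetric h_symm (fun x y => ⟪x, y⟫) X Y Z U
  have ωω := firstBianchi_of_antisymmetric ω_skew (fun x y => ⟪J x, y⟫) X Y Z U
  have ωσ := firstBianchi_of_antisymmetric ω_skew (fun x y => h (J x) y) X Y Z U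
  have σω := firstBianchi_of_antisymmetric σ_skew (fun x y => ⟪J x, y⟫) X Y Z U
  have σσ := firstBianchi_of_decomposable hσ X Y Z U
  simp only [hK, hPp, hPh, hPs]
  linear_combination (1/6) * (1/4) * (gg + ωω) - (1/8) * (gh + hg + ωσ + σω) - σσ

theorem stmt15 {V : Type*} [NormedAddCommGroup V] [InnerProductSpace ℝ V] [FiniteDimensional ℝ V] (hV : finrank ℝ V = 4)
    (J : V →ₗ[ℝ] V) (hJ2 : ∀ x, J (J x) = -x)
    (hJskew : ∀ x y, ⟪J x, y⟫ = -⟪x, J y⟫)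
    (D : Submodule ℝ V) (hDdim : finrank ℝ D = 2)
    (hDJ : ∀ x ∈ D, J x ∈ D)
    (h : V → V → ℝ)
    (hh : ∀ x y, h x y = ⟪(D.orthogonalProjection x : V), (D.orthogonalProjection y : V)⟫)
    (Pp : V → V → V → V → ℝ)
    (hPp : ∀ X Y Z U, Pp X Y Z U = (1/4) * (⟪Y, Z⟫ * ⟪X, U⟫ - ⟪X, Z⟫ * ⟪Y, U⟫
      + ⟪J Y, Z⟫ * ⟪J X, U⟫ - ⟪J X, Z⟫ * ⟪J Y, U⟫ - 2 * ⟪J X, Y⟫ * ⟪J Z, U⟫))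
    (Ph : V → V → V → V → ℝ)
    (hPh : ∀ X Y Z U, Ph X Y Z U = (1/8) * (⟪Y, Z⟫ * h X U - ⟪X, Z⟫ * h Y U
      + ⟪X, U⟫ * h Y Z - ⟪Y, U⟫ * h X Z
      + ⟪J Y, Z⟫ * h (J X) U - ⟪J X, Z⟫ * h (J Y) U
      + ⟪J X, U⟫ * h (J Y) Z - ⟪J Y, U⟫ * h (J X) Z
      - 2 * ⟪J X, Y⟫ * h (J Z) U - 2 * ⟪J Z, U⟫ * h (J X) Y))
    (Ps : V → V → V → V → ℝ)
    (hPs : ∀ X Y Z U, Ps X Y Z U = -(h (J X) Y * h (J Z) U))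
    (K : V → V → V → V → ℝ)
    (hK : ∀ X Y Z U, K X Y Z U = (1/6) * Pp X Y Z U - Ph X Y Z U + Ps X Y Z U) :
    ∀ X Y Z U : V, K X Y Z U + K Y Z X U + K Z X Y U = 0 :=
  stmt15_general J hJskew D hDdim hDJ h hh Pp hPp Ph hPh Ps hPs K hK
end
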